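/- arXiv:1911.00181 — 10 statements merged into one kernel-verified Lean document; each statement's English description precedes it below -/
import Mathlib

section
/- Let φ : ℝⁿ → ℝ ∪ {+∞} be upper semicontinuous on ℝⁿ and quasiconvex on ℝⁿ. Then for every x with φ(x) < +∞, the Greenberg–Pierskalla subdifferential ∂^GP φ(x) is nonempty. -/
open scoped InnerProductSpace

/-- If `φ : ℝⁿ → ℝ ∪ {+∞}` is upper semicontinuous and quasiconvex on `ℝⁿ`, then at every
point `x` with `φ x < +∞` the Greenberg–Pierskalla subdifferential
`∂^GP φ(x) = {g : ∀ y, ⟨g, y - x⟩ ≥ 0 → φ(y) ≥ φ(x)}` is nonempty. -/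
theorem gp_subdifferential_nonempty (n : ℕ)
    (φ : EuclideanSpace ℝ (Fin n) → EReal)
    (husc : UpperSemicontinuous φ)
    (hqc : ∀ x y : EuclideanSpace ℝ (Fin n), ∀ t : ℝ, t ∈ Set.Icc (0 : ℝ) 1 →
      φ ((1 - t) • x + t • y) ≤ max (φ x) (φ y))
    (x : EuclideanSpace ℝ (Fin n)) (hx : φ x < ⊤) :
    ∃ g : EuclideanSpace ℝ (Fin n),
      ∀ y : EuclideanSpace ℝ (Fin n), 0 ≤ ⟪g, y - x⟫_ℝ → φ x ≤ φ y := by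
  set S : Set (EuclideanSpace ℝ (Fin n)) := {y | φ y < φ x} with hS
  have hopen : IsOpen S := husc.isOpen_preimage (φ x)
  have hconv : Convex ℝ S := by
    intro a ha b hb s t hs ht hst
    have h := hqc a b t ⟨ht, by linarith⟩
    have hst' : s = 1 - t := by linarith
    rw [hst'] at *
    calc φ ((1 - t) • a + t • b) ≤ max (φ a) (φ b) := h
      _ < φ x := max_lt ha hb
  have hxS : x ∉ S := fun h => lt_irrefl (φ x) h
  obtain ⟨f, hf⟩ := geometric_hahn_banach_open_point hconv hopen hxS
  refine ⟨(InnerProductSpace.toDual ℝ _).symm f, fun y hy => ?_⟩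
  by_contra hlt
  push_neg at hlt
  have := hf y hlt
  have h2 : ⟪(InnerProductSpace.toDual ℝ (EuclideanSpace ℝ (Fin n))).symm f, y - x⟫_ℝ
      = f y - f x := by
    rw [InnerProductSpace.toDual_symm_apply]
    simp [map_sub]
  rw [h2] at hy
  linarith
end

section
/- Let φ : ℝⁿ → ℝ ∪ {+∞} be upper semicontinuous on ℝⁿ and quasiconvex on ℝⁿ. Then for every x with φ(x) < +∞, the star subdifferential equals the Greenberg–Pierskalla subdifferential together with zero: ∂* φ(x) = ∂^GP φ(x) ∪ {0}. -/
open scoped InnerProductSpace Classical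

/-- For an upper semicontinuous quasiconvex `φ : ℝⁿ → ℝ ∪ {+∞}` and any `x` with `φ x < +∞`,
the star subdifferential (which is all of `ℝⁿ` when `x` is a global minimizer, and
`{g : ∀ y, ⟨g, y - x⟩ > 0 → φ(y) ≥ φ(x)}` otherwise) equals the Greenberg–Pierskalla
subdifferential together with `0`. -/
theorem star_eq_gp_union_zero (n : ℕ)
    (φ : EuclideanSpace ℝ (Fin n) → EReal)
    (husc : UpperSemicontinuous φ)
    (hqc : ∀ x y : EuclideanSpace ℝ (Fin n), ∀ t : ℝ, t ∈ Set.Icc (0 : ℝ) 1 →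
      φ ((1 - t) • x + t • y) ≤ max (φ x) (φ y))
    (x : EuclideanSpace ℝ (Fin n)) (hx : φ x < ⊤) :
    (if ∀ y : EuclideanSpace ℝ (Fin n), φ x ≤ φ y then
        (Set.univ : Set (EuclideanSpace ℝ (Fin n)))
      else
        {g : EuclideanSpace ℝ (Fin n) | ∀ y, 0 < ⟪g, y - x⟫_ℝ → φ x ≤ φ y})
    = {g : EuclideanSpace ℝ (Fin n) | ∀ y, 0 ≤ ⟪g, y - x⟫_ℝ → φ x ≤ φ y} ∪ {0} := by
  by_cases hmin : ∀ y, φ x ≤ φ y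
  · rw [if_pos hmin]
    ext g
    simp only [Set.mem_univ, Set.mem_union, Set.mem_setOf_eq, true_iff]
    exact Or.inl fun y _ => hmin y
  · rw [if_neg hmin]
    ext g
    simp only [Set.mem_setOf_eq, Set.mem_union, Set.mem_singleton_iff]
    constructor
    · intro hg
      by_cases hg0 : g = 0
      · exact Or.inr hg0
      · refine Or.inl fun y hy => ?_
        rcases lt_or_eq_of_le hy with h | h
        · exact hg y h
        · -- ⟪g, y - x⟫ = 0 : approach y along y + t • g
          by_contra hlt
          push_neg at hlt
          obtain ⟨c, hc1, hc2⟩ := exists_between hlt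
          have hnhds : ∀ᶠ z in nhds y, φ z < c := husc y c hc1
          have hcont : Continuous fun t : ℝ => y + t • g :=
            continuous_const.add (continuous_id.smul continuous_const)
          have htend : Filter.Tendsto (fun t : ℝ => y + t • g) (nhds 0) (nhds y) := by
            have := hcont.tendsto 0
            simpa using this
          have hev : ∀ᶠ t : ℝ in nhdsWithin 0 (Set.Ioi 0), φ (y + t • g) < c :=
            (htend.mono_left nhdsWithin_le_nhds).eventually hnhds
          obtain ⟨t, htφ, ht⟩ := (hev.and eventually_mem_nhdsWithin).exists
          have hinner : (0:ℝ) < ⟪g, (y + t • g) - x⟫_ℝ := by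
            have heq : (y + t • g) - x = (y - x) + t • g := by abel
            rw [heq, inner_add_right, real_inner_smul_right, ← h, zero_add]
            exact mul_pos ht ((by rw [real_inner_self_eq_norm_sq]; exact pow_pos (norm_pos_iff.mpr hg0) 2))
          exact absurd ((hg _ hinner).trans_lt htφ) hc2.not_gt
    · rintro (hg | rfl)
      · exact fun y hy => hg y hy.le
      · intro y hy
        simp at hy
end

section
/- Let C ⊆ ℝⁿ be a nonempty closed convex set and f : ℝⁿ × ℝⁿ → ℝ a bifunction with f(x,x) = 0 for all x ∈ C. Let x ∈ C, α > 0, and g ∈ ∂*₂ f(x,x). If the metric projection of x − α·g onto C equals x, then x ∈ S(EP), i.e. f(x,y) ≥ 0 for all y ∈ C. -/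
open scoped InnerProductSpace

/-- If `g ∈ ∂*₂ f(x,x)`, `α > 0` and the metric projection of `x - α·g` onto `C`
equals `x`, then `x` solves the equilibrium problem: `f(x,y) ≥ 0` for all `y ∈ C`. -/
theorem solution_of_fixed_point_projection (n : ℕ)
    (C : Set (EuclideanSpace ℝ (Fin n)))
    (hCne : C.Nonempty) (hCcl : IsClosed C) (hCcv : Convex ℝ C)
    (f : EuclideanSpace ℝ (Fin n) → EuclideanSpace ℝ (Fin n) → ℝ)
    (hdiag : ∀ x ∈ C, f x x = 0)
    (x : EuclideanSpace ℝ (Fin n)) (hx : x ∈ C)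
    (α : ℝ) (hα : 0 < α)
    (g : EuclideanSpace ℝ (Fin n))
    (hg : ∀ y : EuclideanSpace ℝ (Fin n), f x y < 0 → ⟪g, y - x⟫_ℝ < 0)
    (hproj : ∀ y ∈ C, ⟪(x - α • g) - x, y - x⟫_ℝ ≤ 0) :
    ∀ y ∈ C, 0 ≤ f x y := by
  intro y hy
  by_contra h
  push_neg at h
  have h1 := hg y h
  have h2 := hproj y hy
  have h3 : x - α • g - x = (-α) • g := by
    simp [sub_sub_cancel_left, neg_smul]
  rw [h3, real_inner_smul_left] at h2
  nlinarith
end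

section
/- Let C ⊆ ℝⁿ be a nonempty closed convex set, let α_k > 0 satisfy ∑_{k=0}^∞ α_k = +∞ and ∑_{k=0}^∞ α_k² < +∞, and let sequences x^k ∈ C and g^k ∈ ℝⁿ with ‖g^k‖ = 1 satisfy x^{k+1} = P_C(x^k − α_k·g^k) for all k. Then for every x̄ ∈ C, liminf_{k→∞} ⟨g^k, x^k − x̄⟩ ≤ 0. -/
open scoped InnerProductSpace
open Filter

/-- If `α_k > 0`, `∑ α_k = +∞`, `∑ α_k² < +∞`, `x^k ∈ C`, `‖g^k‖ = 1`, and
`x^{k+1} = P_C(x^k - α_k g^k)`, then `liminf ⟨g^k, x^k - x̄⟩ ≤ 0` for every `x̄ ∈ C`. -/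
theorem liminf_inner_nonpos (n : ℕ)
    (C : Set (EuclideanSpace ℝ (Fin n)))
    (hCne : C.Nonempty) (hCcl : IsClosed C) (hCcv : Convex ℝ C)
    (α : ℕ → ℝ) (hαpos : ∀ k, 0 < α k)
    (hαdiv : Tendsto (fun N => ∑ k ∈ Finset.range N, α k) atTop atTop)
    (hαsq : Summable fun k => (α k) ^ 2)
    (x g : ℕ → EuclideanSpace ℝ (Fin n))
    (hxC : ∀ k, x k ∈ C)
    (hgnorm : ∀ k, ‖g k‖ = 1)
    (hproj : ∀ k, ∀ y ∈ C, ⟪(x k - α k • g k) - x (k + 1), y - x (k + 1)⟫_ℝ ≤ 0) :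
    ∀ xbar ∈ C, liminf (fun k => ⟪g k, x k - xbar⟫_ℝ) atTop ≤ 0 := by
  intro xbar hxbar
  set f : ℕ → ℝ := fun k => ⟪g k, x k - xbar⟫_ℝ with hf
  -- key one-step inequality
  have key : ∀ k, ‖x (k+1) - xbar‖^2 ≤ ‖x k - xbar‖^2 - 2 * α k * f k + (α k)^2 := by
    intro k
    have hp := hproj k xbar hxbar
    set u := x k - α k • g k with hu
    have h1 : ‖u - xbar‖^2 = ‖x k - xbar‖^2 - 2 * α k * f k + (α k)^2 := by
      have he : u - xbar = (x k - xbar) - α k • g k := by rw [hu]; abel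
      rw [he, @norm_sub_sq_real, real_inner_smul_right, norm_smul, hgnorm k,
        real_inner_comm]
      simp only [hf, Real.norm_eq_abs, abs_of_pos (hαpos k), mul_one]
      ring
    have hinner : 0 ≤ ⟪u - x (k+1), x (k+1) - xbar⟫_ℝ := by
      have he : xbar - x (k+1) = -(x (k+1) - xbar) := by abel
      rw [he, inner_neg_right] at hp
      linarith
    have h2 : ‖x (k+1) - xbar‖^2 ≤ ‖u - xbar‖^2 := by
      have hdecomp : u - xbar = (u - x (k+1)) + (x (k+1) - xbar) := by abel
      have hexp : ‖u - xbar‖^2 = ‖u - x (k+1)‖^2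
          + 2*⟪u - x (k+1), x (k+1) - xbar⟫_ℝ + ‖x (k+1) - xbar‖^2 := by
        rw [hdecomp, @norm_add_sq_real]
      nlinarith [sq_nonneg ‖u - x (k+1)‖]
    linarith
  rw [liminf_eq]
  apply Real.sSup_le _ le_rfl
  intro a ha
  simp only [eventually_atTop, Set.mem_setOf_eq] at ha
  by_contra hapos
  push_neg at hapos
  obtain ⟨N, hN⟩ := ha
  set S := ∑' k, (α k)^2 with hS
  have htel : ∀ M, ‖x (N+M) - xbar‖^2 ≤ ‖x N - xbar‖^2
      - 2 * ∑ j ∈ Finset.range M, α (N+j) * f (N+j)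
      + ∑ j ∈ Finset.range M, (α (N+j))^2 := by
    intro M
    induction M with
    | zero => simp
    | succ M ih =>
      have hk := key (N+M)
      rw [Finset.sum_range_succ, Finset.sum_range_succ]
      have he : N + (M+1) = (N+M)+1 := rfl
      rw [he]
      linarith
  have hsq_bound : ∀ M, ∑ j ∈ Finset.range M, (α (N+j))^2 ≤ S := by
    intro M
    have := Finset.sum_Ico_eq_sum_range (f := fun k => (α k)^2) (m := N) (n := N+M)
    simp only [Nat.add_sub_cancel_left] at this
    calc ∑ j ∈ Finset.range M, (α (N+j))^2
        = ∑ k ∈ Finset.Ico N (N+M), (α k)^2 := this.symm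
      _ ≤ S := Summable.sum_le_tsum _ (fun k _ => sq_nonneg _) hαsq
  have hbound : ∀ M, 2 * a * (∑ j ∈ Finset.range M, α (N+j)) ≤ ‖x N - xbar‖^2 + S := by
    intro M
    have h1 := htel M
    have h2 := hsq_bound M
    have h3 : a * ∑ j ∈ Finset.range M, α (N+j)
        ≤ ∑ j ∈ Finset.range M, α (N+j) * f (N+j) := by
      rw [Finset.mul_sum]
      refine Finset.sum_le_sum fun j _ => ?_
      have hfj : a ≤ f (N+j) := hN (N+j) (Nat.le_add_right _ _)
      have hα := hαpos (N+j)
      nlinarith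
    linarith [sq_nonneg ‖x (N+M) - xbar‖]
  have htend : Tendsto (fun M => ∑ j ∈ Finset.range M, α (N+j)) atTop atTop := by
    have h1 : Tendsto (fun M => N + M) atTop atTop := by
      simpa [Nat.add_comm] using tendsto_add_atTop_nat N
    have h2 : Tendsto (fun M => ∑ k ∈ Finset.range (N+M), α k) atTop atTop :=
      hαdiv.comp h1
    have h3 : ∀ M, ∑ j ∈ Finset.range M, α (N+j)
        = (∑ k ∈ Finset.range (N+M), α k) - ∑ k ∈ Finset.range N, α k := by
      intro M
      have := Finset.sum_range_add (f := α) N M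
      linarith [this]
    simp only [h3]
    exact tendsto_atTop_add_const_right atTop _ h2
  have h2a : (0:ℝ) < 2 * a := by linarith
  have := (htend.const_mul_atTop h2a).eventually_gt_atTop (‖x N - xbar‖^2 + S)
  obtain ⟨M, hM⟩ := this.exists
  exact absurd (hbound M) (not_le.mpr hM)
end

section
/- Let C ⊆ ℝⁿ be a nonempty closed convex set and f : ℝⁿ × ℝⁿ → ℝ a bifunction with f(x,x) = 0 for all x ∈ C. Assume: f(x,·) is quasiconvex for every x ∈ C; f is jointly upper semicontinuous at every point of C × C; f is pseudomonotone on C and paramonotone on C with respect to S(EP); S(EP) ≠ ∅. Let α_k > 0 with ∑ α_k = +∞ and ∑ α_k² < +∞, and let x^k ∈ C, g^k ∈ ∂*₂ f(x^k, x^k) with ‖g^k‖ = 1 and x^{k+1} = P_C(x^k − α_k·g^k) for all k. If the set {k : x^k ∈ S(EP)} is infinite, then dist(x^k, S(EP)) → 0 as k → ∞. -/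
open scoped InnerProductSpace
open Filter

/-- Convergence of the normal-subgradient algorithm, case (a): if infinitely many iterates
belong to the solution set `S(EP)`, then `dist(x^k, S(EP)) → 0`. -/
theorem dist_to_solutions_tendsto_zero (n : ℕ)
    (C : Set (EuclideanSpace ℝ (Fin n)))
    (hCne : C.Nonempty) (hCcl : IsClosed C) (hCcv : Convex ℝ C)
    (f : EuclideanSpace ℝ (Fin n) → EuclideanSpace ℝ (Fin n) → ℝ)
    (hdiag : ∀ x ∈ C, f x x = 0)
    (S : Set (EuclideanSpace ℝ (Fin n)))
    (hS : S = {x ∈ C | ∀ y ∈ C, 0 ≤ f x y})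
    (hqc : ∀ x ∈ C, ∀ u v : EuclideanSpace ℝ (Fin n), ∀ t ∈ Set.Icc (0 : ℝ) 1,
      f x ((1 - t) • u + t • v) ≤ max (f x u) (f x v))
    (husc : ∀ p ∈ C ×ˢ C,
      UpperSemicontinuousAt (fun q : EuclideanSpace ℝ (Fin n) × EuclideanSpace ℝ (Fin n) =>
        f q.1 q.2) p)
    (hpseudo : ∀ x ∈ C, ∀ y ∈ C, 0 ≤ f x y → f y x ≤ 0)
    (hpara : ∀ x ∈ S, ∀ y ∈ C, f x y = 0 → f y x = 0 → y ∈ S)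
    (hSne : S.Nonempty)
    (α : ℕ → ℝ) (hαpos : ∀ k, 0 < α k)
    (hαdiv : Tendsto (fun N => ∑ k ∈ Finset.range N, α k) atTop atTop)
    (hαsq : Summable fun k => (α k) ^ 2)
    (x g : ℕ → EuclideanSpace ℝ (Fin n))
    (hxC : ∀ k, x k ∈ C)
    (hg : ∀ k, ∀ y : EuclideanSpace ℝ (Fin n), f (x k) y < 0 → ⟪g k, y - x k⟫_ℝ < 0)
    (hgnorm : ∀ k, ‖g k‖ = 1)
    (hproj : ∀ k, ∀ y ∈ C, ⟪(x k - α k • g k) - x (k + 1), y - x (k + 1)⟫_ℝ ≤ 0)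
    (hinf : {k : ℕ | x k ∈ S}.Infinite) :
    Tendsto (fun k => Metric.infDist (x k) S) atTop (nhds 0) := by
  classical
  set d : ℕ → ℝ := fun k => Metric.infDist (x k) S with hd
  -- One-step estimate when the subgradient inequality holds at s
  have hstep : ∀ k, ∀ s ∈ S, ⟪g k, s - x k⟫_ℝ ≤ 0 →
      ‖x (k+1) - s‖^2 ≤ ‖x k - s‖^2 + α k ^2 := by
    intro k s hsS hip
    have hsC : s ∈ C := by rw [hS] at hsS; exact hsS.1
    have hp := hproj k s hsC
    set u := x k - α k • g k with hu
    set p := x (k+1) with hpdef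
    have h1 : ‖u - s‖^2 = ‖u - p‖^2 + 2*⟪u - p, p - s⟫_ℝ + ‖p - s‖^2 := by
      have h := norm_add_sq_real (u - p) (p - s)
      rw [sub_add_sub_cancel] at h
      linarith
    have h2 : 0 ≤ ⟪u - p, p - s⟫_ℝ := by
      have he : ⟪u - p, p - s⟫_ℝ = -⟪u - p, s - p⟫_ℝ := by
        rw [← inner_neg_right]
        congr 1
        abel
      rw [he]
      linarith
    have h3 : ‖p - s‖^2 ≤ ‖u - s‖^2 := by nlinarith [sq_nonneg ‖u - p‖]
    have h4 : ‖u - s‖^2 ≤ ‖x k - s‖^2 + α k ^2 := by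
      have heq : u - s = (x k - s) - α k • g k := by rw [hu]; abel
      rw [heq, norm_sub_sq_real]
      have hin : ⟪x k - s, α k • g k⟫_ℝ = α k * ⟪g k, x k - s⟫_ℝ := by
        rw [real_inner_smul_right, real_inner_comm]
      have hns : ‖α k • g k‖ = α k := by
        rw [norm_smul, hgnorm k, Real.norm_eq_abs, abs_of_pos (hαpos k), mul_one]
      have hge : 0 ≤ ⟪g k, x k - s⟫_ℝ := by
        have he : ⟪g k, x k - s⟫_ℝ = -⟪g k, s - x k⟫_ℝ := by
          rw [← inner_neg_right]
          congr 1
          abel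
        rw [he]
        linarith
      rw [hin, hns]
      nlinarith [hαpos k]
    linarith
  -- Key: d(k+1)^2 ≤ d k ^2 + α k ^2
  have hkey : ∀ k, d (k+1)^2 ≤ d k^2 + α k^2 := by
    intro k
    by_cases hk : x k ∈ S
    · have hd0 : d k = 0 := Metric.infDist_zero_of_mem hk
      have hip : ⟪g k, x k - x k⟫_ℝ ≤ 0 := by simp
      have h := hstep k (x k) hk hip
      rw [sub_self, norm_zero] at h
      have hle : d (k+1) ≤ ‖x (k+1) - x k‖ := by
        simpa [dist_eq_norm] using Metric.infDist_le_dist_of_mem (x := x (k+1)) hk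
      have hd1 : (0:ℝ) ≤ d (k+1) := Metric.infDist_nonneg
      rw [hd0]
      nlinarith [norm_nonneg (x (k+1) - x k)]
    · have hall : ∀ s ∈ S, d (k+1)^2 ≤ dist (x k) s ^2 + α k^2 := by
        intro s hsS
        have hsC : s ∈ C := by rw [hS] at hsS; exact hsS.1
        have hfs : 0 ≤ f s (x k) := by rw [hS] at hsS; exact hsS.2 (x k) (hxC k)
        have h1 : f (x k) s ≤ 0 := hpseudo s hsC (x k) (hxC k) hfs
        have hlt : ⟪g k, s - x k⟫_ℝ < 0 := by
          rcases lt_or_eq_of_le h1 with hlt' | heq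
          · exact hg k s hlt'
          · exfalso
            have h2 : f s (x k) ≤ 0 := hpseudo (x k) (hxC k) s hsC heq.ge
            exact hk (hpara s hsS (x k) (hxC k) (le_antisymm h2 hfs) heq)
        have h := hstep k s hsS (le_of_lt hlt)
        have hle : d (k+1) ≤ ‖x (k+1) - s‖ := by
          simpa [dist_eq_norm] using Metric.infDist_le_dist_of_mem (x := x (k+1)) hsS
        have hd1 : (0:ℝ) ≤ d (k+1) := Metric.infDist_nonneg
        rw [dist_eq_norm]
        nlinarith [norm_nonneg (x (k+1) - s)]
      by_cases hc : d (k+1)^2 ≤ α k^2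
      · nlinarith [Metric.infDist_nonneg (x := x k) (s := S)]
      · push_neg at hc
        have hcn : (0:ℝ) ≤ d (k+1)^2 - α k^2 := by linarith
        set c := Real.sqrt (d (k+1)^2 - α k^2) with hcdef
        have hc2 : c^2 = d (k+1)^2 - α k^2 := Real.sq_sqrt hcn
        have hcd : c ≤ d k := by
          by_contra hcon
          push_neg at hcon
          obtain ⟨s, hsS, hds⟩ := (Metric.infDist_lt_iff hSne).mp hcon
          have := hall s hsS
          have hcs : c ≤ dist (x k) s := by nlinarith [dist_nonneg (x := x k) (y := s), Real.sqrt_nonneg (d (k+1)^2 - α k^2)]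
          linarith
        nlinarith [Real.sqrt_nonneg (d (k+1)^2 - α k^2)]
  -- Partial sums of α^2 are Cauchy
  have hCauchy : CauchySeq (fun N => ∑ j ∈ Finset.range N, α j ^2) :=
    hαsq.hasSum.tendsto_sum_nat.cauchySeq
  rw [Metric.cauchySeq_iff'] at hCauchy
  rw [Metric.tendsto_atTop]
  intro ε hε
  obtain ⟨K, hK⟩ := hCauchy (ε^2) (by positivity)
  obtain ⟨k₀, hk₀S, hk₀K⟩ := hinf.exists_gt K
  refine ⟨k₀, fun k hk => ?_⟩
  -- d k ^2 ≤ sum of α j^2 over [k₀, k)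
  have hbound : ∀ m, k₀ ≤ m → d m ^2 ≤ (∑ j ∈ Finset.range m, α j ^2) - (∑ j ∈ Finset.range k₀, α j ^2) := by
    intro m hm
    induction m, hm using Nat.le_induction with
    | base =>
        have : d k₀ = 0 := Metric.infDist_zero_of_mem hk₀S
        rw [this]
        simp
    | succ m hm ih =>
        have := hkey m
        rw [Finset.sum_range_succ]
        linarith
  have hmono : (∑ j ∈ Finset.range K, α j ^2) ≤ (∑ j ∈ Finset.range k₀, α j ^2) := by
    apply Finset.sum_le_sum_of_subset_of_nonneg
    · exact Finset.range_subset_range.mpr (le_of_lt hk₀K)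
    · intro i _ _
      positivity
  have hKk := hK k (le_trans (le_of_lt hk₀K) hk)
  have hdist : (∑ j ∈ Finset.range k, α j ^2) - (∑ j ∈ Finset.range K, α j ^2) < ε^2 := by
    have habs : |(∑ j ∈ Finset.range k, α j ^2) - (∑ j ∈ Finset.range K, α j ^2)| < ε^2 := by
      simpa [Real.dist_eq] using hKk
    exact lt_of_le_of_lt (le_abs_self _) habs
  have hfin : d k ^2 < ε^2 := by
    have := hbound k hk
    linarith
  have hdk : (0:ℝ) ≤ d k := Metric.infDist_nonneg
  have : d k < ε := lt_of_pow_lt_pow_left₀ 2 (le_of_lt hε) hfin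
  simpa [Real.dist_eq, abs_of_nonneg hdk] using this
end

section
/- Let C ⊆ ℝⁿ be a nonempty closed convex set and f : ℝⁿ × ℝⁿ → ℝ a bifunction with f(x,x) = 0 for all x ∈ C. Assume: f(x,·) is quasiconvex for every x ∈ C; f is jointly upper semicontinuous at every point of C × C; f is pseudomonotone on C and paramonotone on C with respect to S(EP); S(EP) ≠ ∅. Let α_k > 0 with ∑ α_k = +∞ and ∑ α_k² < +∞, and let x^k ∈ C, g^k ∈ ∂*₂ f(x^k, x^k) with ‖g^k‖ = 1 and x^{k+1} = P_C(x^k − α_k·g^k) for all k. If the set {k : x^k ∈ S(EP)} is finite, then there exists x̄ ∈ S(EP) such that x^k → x̄ as k → ∞. -/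
open scoped InnerProductSpace Topology
open Filter Finset

/-!
Since no iterate is a solution, pseudomonotonicity and paramonotonicity give `f (x k) z < 0`
for every solution `z`, hence `0 < ⟪g k, x k - z⟫`, and the projection step yields
`‖x (k+1) - z‖² ≤ ‖x k - z‖² - 2 α k ⟪g k, x k - z⟫ + α k ²`. So the iterates are bounded and
`∑ α k ⟪g k, x k - z⟫ < ∞`; as `∑ α k = ∞`, some subsequence has `⟪g k, x k - z⟫ → 0` and
`x k → p`. Upper semicontinuity then forces `0 ≤ f p z`, so `p` is a solution. With `z = p` the
same inequality makes `‖x k - p‖²` quasi-Fejér, and a quasi-Fejér sequence with a subsequence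
tending to `0` tends to `0`.
-/

section Equilibrium

variable {E : Type*}

def equilibriumSolutions (C : Set E) (f : E → E → ℝ) : Set E :=
  {x ∈ C | ∀ y ∈ C, 0 ≤ f x y}

variable {C : Set E} {f : E → E → ℝ}

theorem mem_equilibriumSolutions_of_apply_nonneg
    (hpseudo : ∀ x ∈ C, ∀ y ∈ C, 0 ≤ f x y → f y x ≤ 0)
    (hpara : ∀ x ∈ equilibriumSolutions C f, ∀ y ∈ C, f x y = 0 → f y x = 0 →
      y ∈ equilibriumSolutions C f)
    {z y : E} (hz : z ∈ equilibriumSolutions C f)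
    (hy : y ∈ C) (hyz : 0 ≤ f y z) : y ∈ equilibriumSolutions C f := by
  have hzy : 0 ≤ f z y := hz.2 y hy
  have hzy' : f z y = 0 := le_antisymm (hpseudo y hy z hz.1 hyz) hzy
  have hyz' : f y z = 0 := le_antisymm (hpseudo z hz.1 y hy hzy) hyz
  exact hpara z hz y hy hzy' hyz'

theorem apply_neg_of_notMem_equilibriumSolutions
    (hpseudo : ∀ x ∈ C, ∀ y ∈ C, 0 ≤ f x y → f y x ≤ 0)
    (hpara : ∀ x ∈ equilibriumSolutions C f, ∀ y ∈ C, f x y = 0 → f y x = 0 →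
      y ∈ equilibriumSolutions C f)
    {z y : E} (hz : z ∈ equilibriumSolutions C f)
    (hy : y ∈ C) (hyS : y ∉ equilibriumSolutions C f) : f y z < 0 :=
  lt_of_not_ge fun h => hyS (mem_equilibriumSolutions_of_apply_nonneg hpseudo hpara hz hy h)

end Equilibrium

section Sequences

variable {a b c d : ℕ → ℝ}

theorem add_sum_range_le_of_descent (h : ∀ k, d (k + 1) ≤ d k - 2 * a k * b k + a k ^ 2)
    (m : ℕ) : d m + ∑ k ∈ range m, 2 * a k * b k ≤ d 0 + ∑ k ∈ range m, a k ^ 2 := by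
  induction m with
  | zero => simp
  | succ m ih =>
    rw [sum_range_succ, sum_range_succ]
    linarith [h m]

theorem le_of_descent (h : ∀ k, d (k + 1) ≤ d k - 2 * a k * b k + a k ^ 2)
    (hab : ∀ k, 0 ≤ a k * b k) (ha : Summable fun k => a k ^ 2) (m : ℕ) :
    d m ≤ d 0 + ∑' k, a k ^ 2 := by
  have hsum : 0 ≤ ∑ k ∈ range m, 2 * a k * b k :=
    sum_nonneg fun k _ => by linarith [hab k]
  linarith [add_sum_range_le_of_descent h m,
    ha.sum_le_tsum (range m) fun k _ => sq_nonneg (a k)]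

theorem summable_mul_of_descent (h : ∀ k, d (k + 1) ≤ d k - 2 * a k * b k + a k ^ 2)
    (hd : ∀ k, 0 ≤ d k) (hab : ∀ k, 0 ≤ a k * b k) (ha : Summable fun k => a k ^ 2) :
    Summable fun k => a k * b k := by
  refine summable_of_sum_range_le (c := (d 0 + ∑' k, a k ^ 2) / 2) hab fun m => ?_
  have hsum : ∑ k ∈ range m, 2 * a k * b k = 2 * ∑ k ∈ range m, a k * b k := by
    rw [mul_sum]; simp only [mul_assoc]
  linarith [add_sum_range_le_of_descent h m, hd m,
    ha.sum_le_tsum (range m) fun k _ => sq_nonneg (a k)]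

theorem frequently_lt_of_summable_mul (ha : ∀ k, 0 ≤ a k) (hdiv : ¬Summable a)
    (hab : Summable fun k => a k * b k) {ε : ℝ} (hε : 0 < ε) : ∃ᶠ k in atTop, b k < ε := by
  refine fun hge => hdiv (Summable.of_norm_bounded_eventually_nat (hab.div_const ε) ?_)
  filter_upwards [hge] with k hk
  rw [Real.norm_of_nonneg (ha k), le_div_iff₀ hε]
  exact mul_le_mul_of_nonneg_left (not_lt.1 hk) (ha k)

theorem tendsto_zero_of_le_add_summable (hd : ∀ k, 0 ≤ d k) (hc : ∀ k, 0 ≤ c k)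
    (hcs : Summable c) (h : ∀ k, d (k + 1) ≤ d k + c k)
    (hfreq : ∀ ε > 0, ∃ᶠ k in atTop, d k < ε) : Tendsto d atTop (𝓝 0) := by
  set T : ℕ → ℝ := fun k => ∑' j, c (j + k)
  have hT : ∀ k, T k = c k + T (k + 1) := fun k => by
    simpa [T, add_assoc, add_comm 1 k] using ((summable_nat_add_iff k).2 hcs).tsum_eq_zero_add
  have hT0 : ∀ k, 0 ≤ T k := fun k => tsum_nonneg fun j => hc (j + k)
  have hanti : Antitone fun k => d k + T k :=
    antitone_nat_of_succ_le fun k => by linarith [h k, hT k]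
  refine tendsto_order.2 ⟨fun ε hε => Eventually.of_forall fun k => hε.trans_le (hd k),
    fun ε hε => ?_⟩
  obtain ⟨k₀, hdk₀, hTk₀⟩ := ((hfreq (ε / 2) (half_pos hε)).and_eventually
    ((tendsto_sum_nat_add c).eventually (gt_mem_nhds (half_pos hε)))).exists
  filter_upwards [eventually_ge_atTop k₀] with k hk
  linarith [hanti hk, hT0 k]

end Sequences

theorem exists_subseq_tendsto_of_frequently_lt {X : Type*} [PseudoMetricSpace X] [ProperSpace X]
    {x : ℕ → X} {b : ℕ → ℝ} (hx : Bornology.IsBounded (Set.range x)) (hb : ∀ k, 0 ≤ b k)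
    (hfreq : ∀ ε > 0, ∃ᶠ k in atTop, b k < ε) :
    ∃ (p : X) (χ : ℕ → ℕ), StrictMono χ ∧ Tendsto (x ∘ χ) atTop (𝓝 p) ∧
      Tendsto (b ∘ χ) atTop (𝓝 0) := by
  obtain ⟨φ, hφ, hbφ⟩ := extraction_forall_of_frequently fun n : ℕ =>
    hfreq (1 / ((n : ℝ) + 1)) Nat.one_div_pos_of_nat
  obtain ⟨p, -, ψ, hψ, hxψ⟩ := tendsto_subseq_of_bounded hx fun n => Set.mem_range_self (φ n)
  have hbφ0 : Tendsto (b ∘ φ) atTop (𝓝 0) :=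
    squeeze_zero (fun n => hb (φ n)) (fun n => (hbφ n).le) tendsto_one_div_add_atTop_nhds_zero_nat
  exact ⟨p, φ ∘ ψ, hφ.comp hψ, hxψ, hbφ0.comp hψ.tendsto_atTop⟩

section InnerProduct

variable {E : Type*} [NormedAddCommGroup E] [InnerProductSpace ℝ E]

/-- The set `∂*₂ f(x, x)` of the paper. -/
def normalSubgradients (f : E → E → ℝ) (x : E) : Set E :=
  {g | ∀ y, f x y < 0 → ⟪g, y - x⟫_ℝ < 0}

theorem inner_pos_of_mem_normalSubgradients {f : E → E → ℝ} {x y g : E}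
    (hg : g ∈ normalSubgradients f x) (hxy : f x y < 0) : 0 < ⟪g, x - y⟫_ℝ := by
  have := hg y hxy
  rw [← neg_sub, inner_neg_right] at this
  linarith

theorem norm_sub_sq_le_of_inner_nonpos {u p z : E} (h : ⟪u - p, z - p⟫_ℝ ≤ 0) :
    ‖p - z‖ ^ 2 ≤ ‖u - z‖ ^ 2 := by
  have hsplit : u - z = (u - p) + (p - z) := by abel
  have hinner : ⟪u - p, p - z⟫_ℝ = -⟪u - p, z - p⟫_ℝ := by
    rw [← inner_neg_right, neg_sub]
  rw [hsplit, norm_add_sq_real, hinner]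
  nlinarith [sq_nonneg ‖u - p‖]

theorem norm_sub_sq_le_of_inner_step_nonpos {x g p z : E} {c : ℝ}
    (h : ⟪(x - c • g) - p, z - p⟫_ℝ ≤ 0) (hg : ‖g‖ = 1) :
    ‖p - z‖ ^ 2 ≤ ‖x - z‖ ^ 2 - 2 * c * ⟪g, x - z⟫_ℝ + c ^ 2 := by
  have hstep : ‖(x - c • g) - z‖ ^ 2 = ‖x - z‖ ^ 2 - 2 * c * ⟪g, x - z⟫_ℝ + c ^ 2 := by
    rw [sub_right_comm, norm_sub_sq_real, real_inner_smul_right, norm_smul, hg,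
      real_inner_comm, Real.norm_eq_abs, mul_one, sq_abs]
    ring
  exact hstep ▸ norm_sub_sq_le_of_inner_nonpos h

/-- Testing the normal subgradient `g` at `y` against `z + (δ / 2) • g`, which upper
semicontinuity keeps in the strict sublevel set `L_f(y)`. -/
theorem exists_eventually_lt_inner_of_apply_neg {f : E → E → ℝ} {p z : E}
    (hf : UpperSemicontinuousAt (fun q : E × E => f q.1 q.2) (p, z)) (hneg : f p z < 0) :
    ∃ δ > 0, ∀ᶠ y in 𝓝 p, ∀ g ∈ normalSubgradients f y, ‖g‖ = 1 → δ < ⟪g, y - z⟫_ℝ := by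
  obtain ⟨δ, hδ, hball⟩ := Metric.eventually_nhds_iff.1 (hf 0 hneg)
  refine ⟨δ / 2, half_pos hδ, ?_⟩
  filter_upwards [Metric.ball_mem_nhds p hδ] with y hy g hg hgn
  have hv : dist (z + (δ / 2) • g) z = δ / 2 := by
    rw [dist_eq_norm, add_sub_cancel_left, norm_smul, hgn, mul_one,
      Real.norm_of_nonneg (half_pos hδ).le]
  have hfv : f y (z + (δ / 2) • g) < 0 :=
    @hball (y, z + (δ / 2) • g) <| by
      rw [Prod.dist_eq]; exact max_lt hy (by rw [hv]; linarith)
  have := inner_pos_of_mem_normalSubgradients hg hfv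
  rw [sub_add_eq_sub_sub, inner_sub_right, real_inner_smul_right, real_inner_self_eq_norm_sq,
    hgn] at this
  linarith

end InnerProduct

theorem tendsto_mem_equilibriumSolutions_of_forall_notMem
    {E : Type*} [NormedAddCommGroup E] [InnerProductSpace ℝ E] [ProperSpace E]
    {C : Set E} (hC : IsClosed C) {f : E → E → ℝ}
    (husc : ∀ q ∈ C ×ˢ C, UpperSemicontinuousAt (fun q : E × E => f q.1 q.2) q)
    (hpseudo : ∀ x ∈ C, ∀ y ∈ C, 0 ≤ f x y → f y x ≤ 0)
    (hpara : ∀ x ∈ equilibriumSolutions C f, ∀ y ∈ C, f x y = 0 → f y x = 0 →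
      y ∈ equilibriumSolutions C f)
    {z : E} (hz : z ∈ equilibriumSolutions C f)
    {α : ℕ → ℝ} (hα : ∀ k, 0 ≤ α k) (hαdiv : ¬Summable α) (hαsq : Summable fun k => α k ^ 2)
    {x g : ℕ → E} (hxC : ∀ k, x k ∈ C) (hg : ∀ k, g k ∈ normalSubgradients f (x k))
    (hgnorm : ∀ k, ‖g k‖ = 1)
    (hproj : ∀ k, ∀ y ∈ C, ⟪(x k - α k • g k) - x (k + 1), y - x (k + 1)⟫_ℝ ≤ 0)
    (hxS : ∀ k, x k ∉ equilibriumSolutions C f) :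
    ∃ p ∈ equilibriumSolutions C f, Tendsto x atTop (𝓝 p) := by
  have hpos : ∀ y ∈ equilibriumSolutions C f, ∀ k, 0 < ⟪g k, x k - y⟫_ℝ :=
    fun y hy k => inner_pos_of_mem_normalSubgradients (hg k)
      (apply_neg_of_notMem_equilibriumSolutions hpseudo hpara hy (hxC k) (hxS k))
  have hinner : ∀ y ∈ equilibriumSolutions C f, ∀ k, 0 ≤ α k * ⟪g k, x k - y⟫_ℝ :=
    fun y hy k => mul_nonneg (hα k) (hpos y hy k).le
  have hdescent : ∀ y ∈ C, ∀ k, ‖x (k + 1) - y‖ ^ 2 ≤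
      ‖x k - y‖ ^ 2 - 2 * α k * ⟪g k, x k - y⟫_ℝ + α k ^ 2 :=
    fun y hy k => norm_sub_sq_le_of_inner_step_nonpos (hproj k y hy) (hgnorm k)
  have hbdd : Bornology.IsBounded (Set.range x) := by
    refine (Metric.isBounded_iff_subset_closedBall z).2
      ⟨√(‖x 0 - z‖ ^ 2 + ∑' k, α k ^ 2), Set.range_subset_iff.2 fun k => ?_⟩
    rw [Metric.mem_closedBall, dist_eq_norm, ← sq_le_sq₀ (norm_nonneg _) (by positivity),
      Real.sq_sqrt (by positivity)]
    exact le_of_descent (d := fun k => ‖x k - z‖ ^ 2) (hdescent z hz.1) (hinner z hz) hαsq k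
  obtain ⟨p, χ, hχ, hxχ, hinnerχ⟩ := exists_subseq_tendsto_of_frequently_lt hbdd
    (fun k => (hpos z hz k).le)
    fun ε => frequently_lt_of_summable_mul hα hαdiv
      (summable_mul_of_descent (d := fun k => ‖x k - z‖ ^ 2) (hdescent z hz.1)
        (fun k => sq_nonneg _) (hinner z hz) hαsq)
  have hpC : p ∈ C := hC.mem_of_tendsto hxχ (Eventually.of_forall fun m => hxC (χ m))
  have hpS : p ∈ equilibriumSolutions C f := by
    refine mem_equilibriumSolutions_of_apply_nonneg hpseudo hpara hz hpC (not_lt.1 fun hneg => ?_)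
    obtain ⟨δ, hδ, hlt⟩ := exists_eventually_lt_inner_of_apply_neg (husc _ ⟨hpC, hz.1⟩) hneg
    obtain ⟨m, hm, hm'⟩ := ((hxχ.eventually hlt).and (hinnerχ.eventually (gt_mem_nhds hδ))).exists
    exact (hm (g (χ m)) (hg _) (hgnorm _)).not_gt hm'
  refine ⟨p, hpS, tendsto_iff_norm_sub_tendsto_zero.2 ?_⟩
  have hdχ : Tendsto (fun m => ‖x (χ m) - p‖ ^ 2) atTop (𝓝 0) := by
    simpa using (tendsto_iff_norm_sub_tendsto_zero.1 hxχ).pow 2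
  have hd : Tendsto (fun k => ‖x k - p‖ ^ 2) atTop (𝓝 0) :=
    tendsto_zero_of_le_add_summable (fun k => sq_nonneg _) (fun k => sq_nonneg _) hαsq
      (fun k => by linarith [hdescent p hpC k, hinner p hpS k])
      fun ε hε => hχ.tendsto_atTop.frequently (hdχ.eventually (gt_mem_nhds hε)).frequently
  simpa using hd.sqrt

theorem converges_to_solution_general (n : ℕ)
    (C : Set (EuclideanSpace ℝ (Fin n)))
    (hCcl : IsClosed C)
    (f : EuclideanSpace ℝ (Fin n) → EuclideanSpace ℝ (Fin n) → ℝ)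
    (S : Set (EuclideanSpace ℝ (Fin n)))
    (hS : S = {x ∈ C | ∀ y ∈ C, 0 ≤ f x y})
    (husc : ∀ p ∈ C ×ˢ C,
      UpperSemicontinuousAt (fun q : EuclideanSpace ℝ (Fin n) × EuclideanSpace ℝ (Fin n) =>
        f q.1 q.2) p)
    (hpseudo : ∀ x ∈ C, ∀ y ∈ C, 0 ≤ f x y → f y x ≤ 0)
    (hpara : ∀ x ∈ S, ∀ y ∈ C, f x y = 0 → f y x = 0 → y ∈ S)
    (hSne : S.Nonempty)
    (α : ℕ → ℝ) (hαpos : ∀ k, 0 < α k)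
    (hαdiv : Tendsto (fun N => ∑ k ∈ Finset.range N, α k) atTop atTop)
    (hαsq : Summable fun k => (α k) ^ 2)
    (x g : ℕ → EuclideanSpace ℝ (Fin n))
    (hxC : ∀ k, x k ∈ C)
    (hg : ∀ k, ∀ y : EuclideanSpace ℝ (Fin n), f (x k) y < 0 → ⟪g k, y - x k⟫_ℝ < 0)
    (hgnorm : ∀ k, ‖g k‖ = 1)
    (hproj : ∀ k, ∀ y ∈ C, ⟪(x k - α k • g k) - x (k + 1), y - x (k + 1)⟫_ℝ ≤ 0)
    (hfin : {k : ℕ | x k ∈ S}.Finite) :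
    ∃ xbar ∈ S, Tendsto x atTop (nhds xbar) := by
  subst hS
  obtain ⟨z, hz⟩ := hSne
  obtain ⟨N, hN⟩ := eventually_atTop.1 (Nat.cofinite_eq_atTop ▸ hfin.eventually_cofinite_notMem)
  have hαdiv' : ¬Summable fun k => α (k + N) := by
    rw [summable_nat_add_iff, not_summable_iff_tendsto_nat_atTop_of_nonneg fun k => (hαpos k).le]
    exact hαdiv
  obtain ⟨p, hp, hxp⟩ := tendsto_mem_equilibriumSolutions_of_forall_notMem hCcl husc hpseudo
    hpara hz (fun k => (hαpos (k + N)).le) hαdiv' ((summable_nat_add_iff N).2 hαsq)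
    (fun k => hxC (k + N)) (fun k => hg (k + N)) (fun k => hgnorm (k + N))
    (fun k => by simpa only [add_right_comm k 1 N] using hproj (k + N))
    fun k => hN (k + N) (Nat.le_add_left N k)
  exact ⟨p, hp, (tendsto_add_atTop_iff_nat N).1 hxp⟩

/-- Convergence of the normal-subgradient algorithm, case (b): if only finitely many iterates
belong to the solution set `S(EP)`, then the sequence converges to a solution of (EP). -/
theorem converges_to_solution (n : ℕ)
    (C : Set (EuclideanSpace ℝ (Fin n)))
    (hCne : C.Nonempty) (hCcl : IsClosed C) (hCcv : Convex ℝ C)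
    (f : EuclideanSpace ℝ (Fin n) → EuclideanSpace ℝ (Fin n) → ℝ)
    (hdiag : ∀ x ∈ C, f x x = 0)
    (S : Set (EuclideanSpace ℝ (Fin n)))
    (hS : S = {x ∈ C | ∀ y ∈ C, 0 ≤ f x y})
    (hqc : ∀ x ∈ C, ∀ u v : EuclideanSpace ℝ (Fin n), ∀ t ∈ Set.Icc (0 : ℝ) 1,
      f x ((1 - t) • u + t • v) ≤ max (f x u) (f x v))
    (husc : ∀ p ∈ C ×ˢ C,
      UpperSemicontinuousAt (fun q : EuclideanSpace ℝ (Fin n) × EuclideanSpace ℝ (Fin n) =>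
        f q.1 q.2) p)
    (hpseudo : ∀ x ∈ C, ∀ y ∈ C, 0 ≤ f x y → f y x ≤ 0)
    (hpara : ∀ x ∈ S, ∀ y ∈ C, f x y = 0 → f y x = 0 → y ∈ S)
    (hSne : S.Nonempty)
    (α : ℕ → ℝ) (hαpos : ∀ k, 0 < α k)
    (hαdiv : Tendsto (fun N => ∑ k ∈ Finset.range N, α k) atTop atTop)
    (hαsq : Summable fun k => (α k) ^ 2)
    (x g : ℕ → EuclideanSpace ℝ (Fin n))
    (hxC : ∀ k, x k ∈ C)
    (hg : ∀ k, ∀ y : EuclideanSpace ℝ (Fin n), f (x k) y < 0 → ⟪g k, y - x k⟫_ℝ < 0)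
    (hgnorm : ∀ k, ‖g k‖ = 1)
    (hproj : ∀ k, ∀ y ∈ C, ⟪(x k - α k • g k) - x (k + 1), y - x (k + 1)⟫_ℝ ≤ 0)
    (hfin : {k : ℕ | x k ∈ S}.Finite) :
    ∃ xbar ∈ S, Tendsto x atTop (nhds xbar) :=
  converges_to_solution_general n C hCcl f S hS husc hpseudo hpara hSne α hαpos hαdiv hαsq x g hxC
    hg hgnorm hproj hfin
end

section
/- Let C ⊆ ℝⁿ be a nonempty closed convex set and f : ℝⁿ × ℝⁿ → ℝ a bifunction with f(x,x) = 0 for all x ∈ C. Let α_k > 0 with ∑ α_k² < +∞, and let x^k ∈ C, g^k ∈ ∂*₂ f(x^k, x^k) with ‖g^k‖ = 1 and x^{k+1} = P_C(x^k − α_k·g^k) for all k. Suppose x* ∈ C and there is k₀ such that f(x^k, x*) < 0 for all k ≥ k₀. Then the real sequence (‖x^k − x*‖) converges and the sequence (x^k) is bounded. -/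
open scoped InnerProductSpace
open Filter

/-- If eventually `f(x^k, x*) < 0`, then the sequence `‖x^k - x*‖` converges and
the sequence `x^k` is bounded. -/
theorem norm_dist_converges_and_bounded (n : ℕ)
    (C : Set (EuclideanSpace ℝ (Fin n)))
    (hCne : C.Nonempty) (hCcl : IsClosed C) (hCcv : Convex ℝ C)
    (f : EuclideanSpace ℝ (Fin n) → EuclideanSpace ℝ (Fin n) → ℝ)
    (hdiag : ∀ x ∈ C, f x x = 0)
    (α : ℕ → ℝ) (hαpos : ∀ k, 0 < α k)
    (hαsq : Summable fun k => (α k) ^ 2)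
    (x g : ℕ → EuclideanSpace ℝ (Fin n))
    (hxC : ∀ k, x k ∈ C)
    (hg : ∀ k, ∀ y : EuclideanSpace ℝ (Fin n), f (x k) y < 0 → ⟪g k, y - x k⟫_ℝ < 0)
    (hgnorm : ∀ k, ‖g k‖ = 1)
    (hproj : ∀ k, ∀ y ∈ C, ⟪(x k - α k • g k) - x (k + 1), y - x (k + 1)⟫_ℝ ≤ 0)
    (xs : EuclideanSpace ℝ (Fin n)) (hxs : xs ∈ C)
    (k₀ : ℕ) (hneg : ∀ k ≥ k₀, f (x k) xs < 0) :
    (∃ L : ℝ, Tendsto (fun k => ‖x k - xs‖) atTop (nhds L)) ∧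
      ∃ M : ℝ, ∀ k, ‖x k‖ ≤ M := by
  set a : ℕ → ℝ := fun k => ‖x k - xs‖ ^ 2 with ha
  have key : ∀ k ≥ k₀, a (k + 1) ≤ a k + α k ^ 2 := by
    intro k hk
    have hproj' := hproj k xs hxs
    set u := x k - α k • g k with hu
    have h1 : ‖x (k + 1) - xs‖ ^ 2 ≤ ‖u - xs‖ ^ 2 := by
      have hdecomp : u - xs = (u - x (k + 1)) - (xs - x (k + 1)) := by abel
      have hrev : ‖x (k + 1) - xs‖ = ‖xs - x (k + 1)‖ := norm_sub_rev _ _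
      have hexp := norm_sub_sq_real (u - x (k + 1)) (xs - x (k + 1))
      rw [hdecomp, hexp, hrev]
      nlinarith [sq_nonneg ‖u - x (k + 1)‖, hproj']
    have h2 : ‖u - xs‖ ^ 2 ≤ a k + α k ^ 2 := by
      have hdecomp : u - xs = (x k - xs) - α k • g k := by rw [hu]; abel
      have hip : ⟪x k - xs, α k • g k⟫_ℝ = α k * ⟪x k - xs, g k⟫_ℝ :=
        real_inner_smul_right _ _ _
      have hpos : (0:ℝ) < ⟪x k - xs, g k⟫_ℝ := by
        have h := hg k xs (hneg k hk)
        have : ⟪g k, xs - x k⟫_ℝ = - ⟪x k - xs, g k⟫_ℝ := by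
          rw [real_inner_comm]
          rw [show xs - x k = -(x k - xs) by abel, inner_neg_left]
        linarith [this ▸ h]
      have hnorm : ‖α k • g k‖ ^ 2 = α k ^ 2 := by
        rw [norm_smul, hgnorm k, mul_one, Real.norm_eq_abs, sq_abs]
      rw [hdecomp, norm_sub_sq_real, hip, hnorm]
      have hαk := hαpos k
      have hak : a k = ‖x k - xs‖ ^ 2 := rfl
      nlinarith
    simpa [ha] using h1.trans h2
  set b : ℕ → ℝ := fun k => a k - ∑ j ∈ Finset.range k, α j ^ 2 with hb
  have hbstep : ∀ k ≥ k₀, b (k + 1) ≤ b k := by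
    intro k hk
    have := key k hk
    simp only [hb, Finset.sum_range_succ]
    linarith
  set S : ℝ := ∑' k, α k ^ 2 with hS
  have hblb : ∀ k, -S ≤ b k := by
    intro k
    have h1 : ∑ j ∈ Finset.range k, α j ^ 2 ≤ S :=
      Summable.sum_le_tsum _ (fun j _ => sq_nonneg _) hαsq
    have h2 : 0 ≤ a k := sq_nonneg _
    simp only [hb]; linarith
  set c : ℕ → ℝ := fun k => b (k + k₀) with hc
  have hcanti : Antitone c := by
    apply antitone_nat_of_succ_le
    intro k
    have := hbstep (k + k₀) (Nat.le_add_left _ _)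
    simpa [hc, Nat.add_right_comm] using this
  have hcbdd : BddBelow (Set.range c) := by
    refine ⟨-S, ?_⟩
    rintro _ ⟨k, rfl⟩
    exact hblb _
  have hcconv : Tendsto c atTop (nhds (⨅ k, c k)) :=
    tendsto_atTop_ciInf hcanti hcbdd
  have hbconv : Tendsto b atTop (nhds (⨅ k, c k)) :=
    (tendsto_add_atTop_iff_nat k₀).mp hcconv
  have hsum : Tendsto (fun k => ∑ j ∈ Finset.range k, α j ^ 2) atTop (nhds S) :=
    hαsq.hasSum.tendsto_sum_nat
  have haconv : Tendsto a atTop (nhds ((⨅ k, c k) + S)) := by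
    have : a = fun k => b k + ∑ j ∈ Finset.range k, α j ^ 2 := by
      funext k; simp [hb]
    rw [this]
    exact hbconv.add hsum
  have hnorm_eq : (fun k => ‖x k - xs‖) = fun k => Real.sqrt (a k) := by
    funext k
    rw [ha]
    exact (Real.sqrt_sq (norm_nonneg _)).symm
  have hLconv : Tendsto (fun k => ‖x k - xs‖) atTop
      (nhds (Real.sqrt ((⨅ k, c k) + S))) := by
    rw [hnorm_eq]
    exact haconv.sqrt
  refine ⟨⟨_, hLconv⟩, ?_⟩
  obtain ⟨M', hM'⟩ := hLconv.bddAbove_range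
  refine ⟨M' + ‖xs‖, fun k => ?_⟩
  have h1 : ‖x k - xs‖ ≤ M' := hM' ⟨k, rfl⟩
  have h2 : ‖x k‖ ≤ ‖x k - xs‖ + ‖xs‖ := by
    calc ‖x k‖ = ‖(x k - xs) + xs‖ := by rw [sub_add_cancel]
    _ ≤ ‖x k - xs‖ + ‖xs‖ := norm_add_le _ _
  linarith
end

section
/- Let C ⊆ ℝⁿ be a nonempty closed convex set and f : ℝⁿ × ℝⁿ → ℝ a bifunction with f(x,x) = 0 for all x ∈ C which is pseudomonotone on C and paramonotone on C with respect to S(EP). Let α_k > 0, and let x^k ∈ C, g^k ∈ ∂*₂ f(x^k, x^k) with ‖g^k‖ = 1 and x^{k+1} = P_C(x^k − α_k·g^k) for all k. Suppose m < K are indices such that x^m ∈ S(EP) and x^k ∉ S(EP) for every k with m < k < K. Then ‖x^K − x^m‖² ≤ ∑_{i=m}^{K−1} α_i². -/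
open scoped InnerProductSpace

/-- If `x^m ∈ S(EP)` and none of the iterates strictly between indices `m` and `K`
is a solution, then `‖x^K - x^m‖² ≤ ∑_{i=m}^{K-1} α_i²`. -/
theorem dist_sq_le_sum_sq_between_solutions (n : ℕ)
    (C : Set (EuclideanSpace ℝ (Fin n)))
    (hCne : C.Nonempty) (hCcl : IsClosed C) (hCcv : Convex ℝ C)
    (f : EuclideanSpace ℝ (Fin n) → EuclideanSpace ℝ (Fin n) → ℝ)
    (hdiag : ∀ x ∈ C, f x x = 0)
    (S : Set (EuclideanSpace ℝ (Fin n)))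
    (hS : S = {x ∈ C | ∀ y ∈ C, 0 ≤ f x y})
    (hpseudo : ∀ x ∈ C, ∀ y ∈ C, 0 ≤ f x y → f y x ≤ 0)
    (hpara : ∀ x ∈ S, ∀ y ∈ C, f x y = 0 → f y x = 0 → y ∈ S)
    (α : ℕ → ℝ) (hαpos : ∀ k, 0 < α k)
    (x g : ℕ → EuclideanSpace ℝ (Fin n))
    (hxC : ∀ k, x k ∈ C)
    (hg : ∀ k, ∀ y : EuclideanSpace ℝ (Fin n), f (x k) y < 0 → ⟪g k, y - x k⟫_ℝ < 0)
    (hgnorm : ∀ k, ‖g k‖ = 1)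
    (hproj : ∀ k, ∀ y ∈ C, ⟪(x k - α k • g k) - x (k + 1), y - x (k + 1)⟫_ℝ ≤ 0)
    (m K : ℕ) (hmK : m < K)
    (hxm : x m ∈ S)
    (hnot : ∀ k, m < k → k < K → x k ∉ S) :
    ‖x K - x m‖ ^ 2 ≤ ∑ i ∈ Finset.Ico m K, (α i) ^ 2 := by
  classical
  set s := x m with hs
  have hsC : s ∈ C := by rw [hS] at hxm; exact hxm.1
  have hsSol : ∀ y ∈ C, 0 ≤ f s y := by rw [hS] at hxm; exact hxm.2
  -- key: ⟨g k, x k - s⟩ ≥ 0 for m ≤ k < K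
  have hkey : ∀ k, m ≤ k → k < K → 0 ≤ ⟪g k, x k - s⟫_ℝ := by
    intro k hmk hkK
    rcases eq_or_lt_of_le hmk with h | h
    · subst h
      simp [hs]
    · -- m < k < K, so x k ∉ S
      have hxkC := hxC k
      have h1 : 0 ≤ f s (x k) := hsSol _ hxkC
      have h2 : f (x k) s ≤ 0 := hpseudo s hsC (x k) hxkC h1
      have h3 : f (x k) s < 0 := by
        rcases lt_or_eq_of_le h2 with h' | h'
        · exact h'
        · exfalso
          have h4 : f s (x k) ≤ 0 := hpseudo (x k) hxkC s hsC (le_of_eq h'.symm)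
          have h5 : f s (x k) = 0 := le_antisymm h4 h1
          exact hnot k h hkK (hpara s hxm (x k) hxkC h5 h')
      have := hg k s h3
      have hflip : ⟪g k, s - x k⟫_ℝ = - ⟪g k, x k - s⟫_ℝ := by
        rw [show s - x k = -(x k - s) by abel, inner_neg_right]
      linarith [hflip ▸ this]
  -- step estimate
  have step : ∀ k, m ≤ k → k < K →
      ‖x (k+1) - s‖ ^ 2 ≤ ‖x k - s‖ ^ 2 + α k ^ 2 := by
    intro k hmk hkK
    have hp := hproj k s hsC
    have h1 : ‖x (k+1) - s‖ ^ 2 ≤ ‖(x k - α k • g k) - s‖ ^ 2 := by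
      have hdecomp : (x k - α k • g k) - s
          = ((x k - α k • g k) - x (k+1)) + (x (k+1) - s) := by abel
      rw [hdecomp, norm_add_sq_real]
      have hneg : ⟪(x k - α k • g k) - x (k+1), x (k+1) - s⟫_ℝ
          = - ⟪(x k - α k • g k) - x (k+1), s - x (k+1)⟫_ℝ := by
        rw [show x (k+1) - s = -(s - x (k+1)) by abel, inner_neg_right]
      have hge : 0 ≤ ⟪(x k - α k • g k) - x (k+1), x (k+1) - s⟫_ℝ := by
        rw [hneg]; linarith
      nlinarith [sq_nonneg ‖(x k - α k • g k) - x (k+1)‖, hge]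
    have h2 : ‖(x k - α k • g k) - s‖ ^ 2
        = ‖x k - s‖ ^ 2 - 2 * (α k * ⟪g k, x k - s⟫_ℝ) + α k ^ 2 := by
      rw [show (x k - α k • g k) - s = (x k - s) - α k • g k by abel,
        norm_sub_sq_real, real_inner_smul_right, norm_smul, real_inner_comm]
      have : ‖g k‖ = 1 := hgnorm k
      simp [this, mul_pow, sq_abs]
    have h3 := hkey k hmk hkK
    have hα := (hαpos k).le
    nlinarith [mul_nonneg hα h3]
  -- induction
  have main : ∀ N, m + 1 ≤ N → N ≤ K →
      ‖x N - s‖ ^ 2 ≤ ∑ i ∈ Finset.Ico m N, (α i) ^ 2 := by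
    intro N hN
    induction N, hN using Nat.le_induction with
    | base =>
      intro hK
      have := step m le_rfl (by omega)
      simp only [hs, sub_self, norm_zero] at this
      rw [Finset.sum_Ico_succ_top (le_refl m), Finset.Ico_self, Finset.sum_empty]
      simpa using this
    | succ N hN ih =>
      intro hK
      have h1 := ih (by omega)
      have h2 := step N (by omega) (by omega)
      rw [Finset.sum_Ico_succ_top (by omega : m ≤ N)]
      linarith
  exact main K hmK le_rfl
end

section
/- Let C ⊆ ℝⁿ be a nonempty closed convex set and f : ℝⁿ × ℝⁿ → ℝ a bifunction with f(x,x) = 0 for all x ∈ C. Let α_k > 0 with ∑ α_k = +∞ and ∑ α_k² < +∞, and let x^k ∈ C, g^k ∈ ∂*₂ f(x^k, x^k) with ‖g^k‖ = 1 and x^{k+1} = P_C(x^k − α_k·g^k) for all k. Suppose x* ∈ C and there is k₀ such that f(x^k, x*) < 0 for all k ≥ k₀. Then liminf_{k→∞} ⟨g^k, x^k − x*⟩ = 0. -/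
open scoped InnerProductSpace
open Filter

lemma proj_contract {n : ℕ} (u P s : EuclideanSpace ℝ (Fin n))
    (h : ⟪u - P, s - P⟫_ℝ ≤ 0) : ‖P - s‖ ≤ ‖u - s‖ := by
  have h1 : ‖s - P‖^2 ≤ ⟪s - P, s - u⟫_ℝ := by
    have : ⟪s - P, s - u⟫_ℝ = ‖s - P‖^2 - ⟪u - P, s - P⟫_ℝ := by
      rw [show s - u = (s - P) - (u - P) by abel, inner_sub_right, real_inner_comm (u - P),
        real_inner_self_eq_norm_sq]
    linarith
  have h2 : ⟪s - P, s - u⟫_ℝ ≤ ‖s - P‖ * ‖s - u‖ := real_inner_le_norm _ _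
  have h4 := norm_nonneg (s - P)
  rw [norm_sub_rev P s, norm_sub_rev u s]
  nlinarith [norm_nonneg (s - u)]

/-- If eventually `f(x^k, x*) < 0`, then `liminf ⟨g^k, x^k - x*⟩ = 0`. -/
theorem liminf_inner_eq_zero (n : ℕ)
    (C : Set (EuclideanSpace ℝ (Fin n)))
    (hCne : C.Nonempty) (hCcl : IsClosed C) (hCcv : Convex ℝ C)
    (f : EuclideanSpace ℝ (Fin n) → EuclideanSpace ℝ (Fin n) → ℝ)
    (hdiag : ∀ x ∈ C, f x x = 0)
    (α : ℕ → ℝ) (hαpos : ∀ k, 0 < α k)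
    (hαdiv : Tendsto (fun N => ∑ k ∈ Finset.range N, α k) atTop atTop)
    (hαsq : Summable fun k => (α k) ^ 2)
    (x g : ℕ → EuclideanSpace ℝ (Fin n))
    (hxC : ∀ k, x k ∈ C)
    (hg : ∀ k, ∀ y : EuclideanSpace ℝ (Fin n), f (x k) y < 0 → ⟪g k, y - x k⟫_ℝ < 0)
    (hgnorm : ∀ k, ‖g k‖ = 1)
    (hproj : ∀ k, ∀ y ∈ C, ⟪(x k - α k • g k) - x (k + 1), y - x (k + 1)⟫_ℝ ≤ 0)
    (xs : EuclideanSpace ℝ (Fin n)) (hxs : xs ∈ C)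
    (k₀ : ℕ) (hneg : ∀ k ≥ k₀, f (x k) xs < 0) :
    liminf (fun k => ⟪g k, x k - xs⟫_ℝ) atTop = 0 := by
  set t : ℕ → ℝ := fun k => ⟪g k, x k - xs⟫_ℝ with ht
  set a : ℕ → ℝ := fun k => ‖x k - xs‖^2 with ha
  -- t k > 0 for k ≥ k₀
  have htpos : ∀ k ≥ k₀, 0 < t k := by
    intro k hk
    have := hg k xs (hneg k hk)
    have h2 : ⟪g k, xs - x k⟫_ℝ = -t k := by
      simp only [ht]
      rw [show xs - x k = -(x k - xs) by abel, inner_neg_right]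
    rw [h2] at this; linarith
  -- key inequality
  have key : ∀ k, a (k+1) ≤ a k - 2 * α k * t k + α k ^ 2 := by
    intro k
    have h1 := proj_contract (x k - α k • g k) (x (k+1)) xs (hproj k xs hxs)
    have h2 : a (k+1) ≤ ‖(x k - α k • g k) - xs‖^2 := by
      have := norm_nonneg (x (k+1) - xs)
      simp only [ha]
      nlinarith [norm_nonneg ((x k - α k • g k) - xs)]
    have h3 : ‖(x k - α k • g k) - xs‖^2 = a k - 2 * α k * t k + α k ^ 2 := by
      rw [show (x k - α k • g k) - xs = (x k - xs) - α k • g k by abel,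
        norm_sub_sq_real, real_inner_smul_right, norm_smul, real_inner_comm]
      simp [hgnorm k, abs_of_pos (hαpos k), ht, ha]
      ring
    linarith
  -- telescoped bound
  set S : ℝ := ∑' k, (α k)^2 with hS
  have hα2le : ∀ N : ℕ, ∑ k ∈ Finset.Ico k₀ N, (α k)^2 ≤ S :=
    fun N => Summable.sum_le_tsum _ (fun i _ => sq_nonneg _) hαsq
  have hP : ∀ N ≥ k₀, 2 * ∑ k ∈ Finset.Ico k₀ N, α k * t k + a N ≤
      a k₀ + ∑ k ∈ Finset.Ico k₀ N, (α k)^2 := by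
    intro N hN
    induction N, hN using Nat.le_induction with
    | base => simp
    | succ N hN ih =>
      rw [Finset.sum_Ico_succ_top hN, Finset.sum_Ico_succ_top hN]
      have := key N
      linarith
  have hB : ∀ N, ∑ k ∈ Finset.Ico k₀ N, α k * t k ≤ (a k₀ + S) / 2 := by
    intro N
    rcases le_or_gt k₀ N with hN | hN
    · have := hP N hN
      have := hα2le N
      have : 0 ≤ a N := sq_nonneg _
      linarith [hP N hN, hα2le N]
    · rw [Finset.Ico_eq_empty (by omega)]
      have h0 : (0:ℝ) ≤ a k₀ := by simp only [ha]; positivity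
      have hS0 : (0:ℝ) ≤ S := tsum_nonneg (fun k => sq_nonneg (α k))
      simp
      linarith
  set B : ℝ := (a k₀ + S) / 2 with hBdef
  -- frequently t k ≤ ε for every ε > 0
  have hfreq : ∀ ε > (0:ℝ), ∃ᶠ k in atTop, t k ≤ ε := by
    intro ε hε
    by_contra hcon
    rw [not_frequently] at hcon
    simp only [not_le] at hcon
    rw [eventually_atTop] at hcon
    obtain ⟨k₁, hk₁⟩ := hcon
    set m := max k₀ k₁ with hm
    have hbound : ∀ N, ∑ k ∈ Finset.Ico m N, α k ≤ B / ε := by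
      intro N
      have h1 : ε * ∑ k ∈ Finset.Ico m N, α k ≤ ∑ k ∈ Finset.Ico m N, α k * t k := by
        rw [Finset.mul_sum]
        apply Finset.sum_le_sum
        intro i hi
        rw [Finset.mem_Ico] at hi
        have := hk₁ i (le_trans (le_max_right _ _) hi.1)
        have := hαpos i
        nlinarith
      have h2 : ∑ k ∈ Finset.Ico m N, α k * t k ≤ ∑ k ∈ Finset.Ico k₀ N, α k * t k := by
        apply Finset.sum_le_sum_of_subset_of_nonneg
        · apply Finset.Ico_subset_Ico (le_max_left _ _) le_rfl
        · intro i hi _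
          rw [Finset.mem_Ico] at hi
          have := htpos i hi.1
          have := hαpos i
          nlinarith
      have h3 := hB N
      rw [le_div_iff₀ hε]
      nlinarith
    -- contradiction with divergence
    have h4 : ∀ N, ∑ k ∈ Finset.range N, α k ≤ ∑ k ∈ Finset.range m, α k + B / ε := by
      intro N
      rcases le_or_gt m N with hN | hN
      · rw [← Finset.sum_range_add_sum_Ico α hN]
        linarith [hbound N]
      · have : ∑ k ∈ Finset.range N, α k ≤ ∑ k ∈ Finset.range m, α k :=
          Finset.sum_le_sum_of_subset_of_nonneg
            (Finset.range_subset_range.mpr hN.le) (fun i _ _ => (hαpos i).le)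
        have hbe : 0 ≤ B / ε := by
          have := hbound m
          simpa using this
        linarith
    obtain ⟨N, hN⟩ := (tendsto_atTop.mp hαdiv (∑ k ∈ Finset.range m, α k + B / ε + 1)).exists
    linarith [h4 N]
  -- conclude
  have hbd_below : IsBoundedUnder (· ≥ ·) atTop t :=
    isBoundedUnder_of_eventually_ge (eventually_atTop.mpr ⟨k₀, fun k hk => (htpos k hk).le⟩)
  have hbd_above : IsBoundedUnder (· ≤ ·) atTop t := by
    refine isBoundedUnder_of_eventually_le (a := Real.sqrt (a k₀ + S)) (eventually_atTop.mpr ⟨k₀, fun k hk => ?_⟩)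
    have h1 : t k ≤ ‖x k - xs‖ := by
      have := real_inner_le_norm (g k) (x k - xs)
      rw [hgnorm k] at this; simpa using this
    have h2 : a k ≤ a k₀ + S := by
      have hp := hP k hk
      have hsum : 0 ≤ ∑ j ∈ Finset.Ico k₀ k, α j * t j :=
        Finset.sum_nonneg (fun i hi =>
          mul_nonneg (hαpos i).le (htpos i (Finset.mem_Ico.mp hi).1).le)
      linarith [hα2le k]
    have h0 : (0:ℝ) ≤ a k₀ + S :=
      add_nonneg (by simp only [ha]; positivity) (tsum_nonneg fun j => sq_nonneg (α j))
    have h3 : ‖x k - xs‖ ≤ Real.sqrt (a k₀ + S) := by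
      rw [Real.le_sqrt (norm_nonneg _)]
      simpa only [ha] using h2
      exact h0
    linarith
  have hge : (0:ℝ) ≤ liminf t atTop :=
    le_liminf_of_le hbd_above.isCoboundedUnder_ge
      (eventually_atTop.mpr ⟨k₀, fun k hk => (htpos k hk).le⟩)
  have hle : liminf t atTop ≤ 0 := by
    by_contra hcon
    push_neg at hcon
    have := liminf_le_of_frequently_le (hfreq (liminf t atTop / 2) (by linarith)) hbd_below
    linarith
  linarith
end

section
/- Let C ⊆ ℝⁿ be a nonempty closed convex set and f : ℝⁿ × ℝⁿ → ℝ a bifunction with f(x,x) = 0 for all x ∈ C, which is pseudomonotone on C and jointly upper semicontinuous at every point of C × C. Let x* ∈ S(EP). Suppose (u^i) is a sequence in C converging to x̄, with f(u^i, x*) < 0 for all i, and (h^i) is a sequence with h^i ∈ ∂*₂ f(u^i, u^i), ‖h^i‖ = 1, and ⟨h^i, u^i − x*⟩ → 0. Then f(x̄, x*) = 0. -/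
open scoped InnerProductSpace
open Filter

/-- If `u^i → x̄` in `C` with `f(u^i, x*) < 0`, `h^i ∈ ∂*₂ f(u^i, u^i)` with `‖h^i‖ = 1`
and `⟨h^i, u^i - x*⟩ → 0`, where `x*` solves (EP), `f` is pseudomonotone on `C` and jointly
upper semicontinuous on `C × C`, then `f(x̄, x*) = 0`. -/
theorem limit_point_value_eq_zero (n : ℕ)
    (C : Set (EuclideanSpace ℝ (Fin n)))
    (hCne : C.Nonempty) (hCcl : IsClosed C) (hCcv : Convex ℝ C)
    (f : EuclideanSpace ℝ (Fin n) → EuclideanSpace ℝ (Fin n) → ℝ)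
    (hdiag : ∀ x ∈ C, f x x = 0)
    (hpseudo : ∀ x ∈ C, ∀ y ∈ C, 0 ≤ f x y → f y x ≤ 0)
    (husc : ∀ p ∈ C ×ˢ C,
      UpperSemicontinuousAt (fun q : EuclideanSpace ℝ (Fin n) × EuclideanSpace ℝ (Fin n) =>
        f q.1 q.2) p)
    (xs : EuclideanSpace ℝ (Fin n)) (hxs : xs ∈ C) (hxsS : ∀ y ∈ C, 0 ≤ f xs y)
    (u : ℕ → EuclideanSpace ℝ (Fin n)) (huC : ∀ i, u i ∈ C)
    (xbar : EuclideanSpace ℝ (Fin n)) (hulim : Tendsto u atTop (nhds xbar))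
    (hfu : ∀ i, f (u i) xs < 0)
    (h : ℕ → EuclideanSpace ℝ (Fin n))
    (hh : ∀ i, ∀ y : EuclideanSpace ℝ (Fin n), f (u i) y < 0 → ⟪h i, y - u i⟫_ℝ < 0)
    (hhnorm : ∀ i, ‖h i‖ = 1)
    (hinner : Tendsto (fun i => ⟪h i, u i - xs⟫_ℝ) atTop (nhds 0)) :
    f xbar xs = 0 := by

  have hxbarC : xbar ∈ C := hCcl.mem_of_tendsto hulim (Filter.Eventually.of_forall huC)
  have hle : f xbar xs ≤ 0 := hpseudo xs hxs xbar hxbarC (hxsS xbar hxbarC)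
  rcases lt_or_eq_of_le hle with hlt | heq
  · -- derive a contradiction
    exfalso
    have hp : (xbar, xs) ∈ C ×ˢ C := ⟨hxbarC, hxs⟩
    have hev := husc (xbar, xs) hp 0 hlt
    rw [Metric.eventually_nhds_iff] at hev
    obtain ⟨ε, hε, hball⟩ := hev
    -- eventually u i is within ε of xbar
    have hev1 : ∀ᶠ i in atTop, dist (u i) xbar < ε :=
      Filter.eventually_atTop.mpr (Metric.tendsto_atTop.mp hulim ε hε)
    have hev2 : ∀ᶠ i in atTop, |⟪h i, u i - xs⟫_ℝ| < ε / 2 := by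
      have := Metric.tendsto_atTop.mp hinner (ε / 2) (by linarith)
      filter_upwards [Filter.eventually_atTop.mpr this] with i hi
      simpa [Real.dist_eq] using hi
    obtain ⟨i, hi1, hi2⟩ := (hev1.and hev2).exists
    -- consider y = xs + (ε/2) • h i
    set y : EuclideanSpace ℝ (Fin n) := xs + (ε / 2) • h i with hy
    have hdy : dist y xs < ε := by
      rw [dist_eq_norm]
      have : y - xs = (ε / 2) • h i := by rw [hy]; abel
      rw [this, norm_smul, hhnorm i, Real.norm_eq_abs,
        abs_of_pos (by linarith : (0:ℝ) < ε / 2)]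
      linarith
    have hq : dist ((u i, y) : EuclideanSpace ℝ (Fin n) × EuclideanSpace ℝ (Fin n))
        (xbar, xs) < ε := by
      rw [Prod.dist_eq]
      exact max_lt hi1 hdy
    have hfneg : f (u i) y < 0 := hball hq
    have hinn := hh i y hfneg
    have hsplit : ⟪h i, y - u i⟫_ℝ = ⟪h i, xs - u i⟫_ℝ + (ε / 2) := by
      have : y - u i = (xs - u i) + (ε / 2) • h i := by rw [hy]; abel
      rw [this, inner_add_right, real_inner_smul_right, real_inner_self_eq_norm_sq,
        hhnorm i]
      ring
    have hneg : ⟪h i, xs - u i⟫_ℝ = -⟪h i, u i - xs⟫_ℝ := by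
      rw [← inner_neg_right]; congr 1; abel
    rw [hsplit, hneg] at hinn
    have := abs_lt.mp hi2
    linarith
  · exact heq
end
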